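/- Let H ≤ G and N ⊴ G in a finite group G. If N ≤ H and H satisfies the partial Π-property in G, then HN/N = H/N satisfies the partial Π-property in G/N. -/

import Mathlib

/-- A subgroup `H` of a finite group `G` satisfies the partial `Π`-property in `G` if
there is a chief series `1 = c 0 < c 1 < ... < c n = G` such that for every chief factor
`c (i+1) / c i`, the index `|G/c i : N_{G/c i}((H ⊔ c i) ⊓ c (i+1) / c i)|`
(which equals `|G : N_G((H ⊔ c i) ⊓ c (i+1))|`) is a `π`-number for
`π = π((H ⊔ c i) ⊓ c (i+1) / c i)`, i.e. all its prime divisors divide the order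
`|(H ⊔ c i) ⊓ c (i+1)| / |c i|` of that intersection. -/
def PartialPiProperty (G : Type) [Group G] (H : Subgroup G) : Prop :=
  ∃ (n : ℕ) (c : ℕ → Subgroup G),
    c 0 = ⊥ ∧ c n = ⊤ ∧
    (∀ i, i ≤ n → (c i).Normal) ∧
    (∀ i, i < n → c i < c (i + 1)) ∧
    (∀ i, i < n → ∀ X : Subgroup G, X.Normal → c i ≤ X → X ≤ c (i + 1) →
      X = c i ∨ X = c (i + 1)) ∧
    (∀ i, i < n → ∀ q : ℕ, q.Prime →
      q ∣ (Subgroup.normalizer (((H ⊔ c i) ⊓ c (i + 1) : Subgroup G) : Set G)).index →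
      q ∣ Nat.card ((H ⊔ c i) ⊓ c (i + 1) : Subgroup G) / Nat.card (c i))

/-!
Push a chief series of `G` witnessing the property through `f : G → G/N`. A chief factor
`B/A` either collapses (`f A = f B`) or satisfies `(A ⊔ N) ⊓ B = A`, so that `f B / f A` is
again a chief factor. In the second case `N ≤ H` gives `f((H ⊔ A) ⊓ B) = (f H ⊔ f A) ⊓ f B`,
the order `|(H ⊔ A) ⊓ B : A|` is unchanged by `f`, and the normalizer index can only shrink.
Deleting the collapsed steps leaves a chief series of `G/N` witnessing the property for `f H`.
-/

theorem exists_chain_of_forall_eq_or {α : Type*} (P : α → α → Prop) (d : ℕ → α) :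
    ∀ n : ℕ, (∀ i < n, d i = d (i + 1) ∨ P (d i) (d (i + 1))) →
      ∃ (m : ℕ) (e : ℕ → α), e 0 = d 0 ∧ e m = d n ∧ ∀ k < m, P (e k) (e (k + 1)) := by
  intro n
  induction n with
  | zero => exact fun _ => ⟨0, d, rfl, rfl, by omega⟩
  | succ n ih =>
    intro hd
    obtain ⟨m, e, he0, hem, he⟩ := ih fun i hi => hd i (by omega)
    rcases hd n (by omega) with heq | hP
    · exact ⟨m, e, he0, hem.trans heq, he⟩
    · refine ⟨m + 1, fun k => if k ≤ m then e k else d (n + 1), by simp [he0], by simp, ?_⟩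
      intro k hk
      rcases (Nat.lt_succ_iff.mp hk).lt_or_eq with hkm | rfl
      · simpa [hkm.le, Nat.succ_le_of_lt hkm] using he k hkm
      · simpa [hem] using hP

namespace Subgroup

variable {G G' : Type*} [Group G] [Group G']

theorem map_inf_of_ker_le (f : G →* G') {A : Subgroup G} (B : Subgroup G) (hA : f.ker ≤ A) :
    (A ⊓ B).map f = A.map f ⊓ B.map f := by
  refine le_antisymm (map_inf_le A B f) ?_
  rintro _ ⟨⟨a, ha, rfl⟩, b, hb, hba⟩
  have hab : a⁻¹ * b ∈ A := hA (by simp [MonoidHom.mem_ker, hba])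
  exact ⟨b, ⟨by simpa using A.mul_mem ha hab, hb⟩, hba⟩

theorem card_div_card_eq_relIndex [Finite G] {K L : Subgroup G} (h : K ≤ L) :
    Nat.card L / Nat.card K = K.relIndex L := by
  rw [← relIndex_bot_left L, ← relIndex_mul_relIndex ⊥ K L bot_le h, relIndex_bot_left,
    Nat.mul_div_cancel_left _ Nat.card_pos]

theorem relIndex_map_map_of_sup_ker_inf_eq (f : G →* G') {A D : Subgroup G}
    (h : (A ⊔ f.ker) ⊓ D = A) : (A.map f).relIndex (D.map f) = A.relIndex D := by
  rw [← relIndex_comap, comap_map_eq, ← inf_relIndex_right, h]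

theorem index_normalizer_map_dvd {f : G →* G'} (hf : Function.Surjective f) (D : Subgroup G) :
    (normalizer (D.map f : Set G')).index ∣ (normalizer (D : Set G)).index :=
  (index_dvd_of_le (le_normalizer_map f)).trans (index_map_dvd _ hf)

end Subgroup

open Subgroup

structure IsChiefFactor {G : Type*} [Group G] (A B : Subgroup G) : Prop where
  normal_left : A.Normal
  normal_right : B.Normal
  lt : A < B
  eq_or_eq : ∀ X : Subgroup G, X.Normal → A ≤ X → X ≤ B → X = A ∨ X = B

def PiPropertyAt {G : Type*} [Group G] (H A B : Subgroup G) : Prop :=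
  ∀ q : ℕ, q.Prime → q ∣ (normalizer (((H ⊔ A) ⊓ B : Subgroup G) : Set G)).index →
    q ∣ Nat.card ((H ⊔ A) ⊓ B : Subgroup G) / Nat.card A

theorem partialPiProperty_iff {G : Type} [Group G] (H : Subgroup G) :
    PartialPiProperty G H ↔ ∃ (n : ℕ) (c : ℕ → Subgroup G), c 0 = ⊥ ∧ c n = ⊤ ∧
      ∀ i < n, IsChiefFactor (c i) (c (i + 1)) ∧ PiPropertyAt H (c i) (c (i + 1)) := by
  constructor
  · rintro ⟨n, c, hc0, hcn, hnormal, hlt, hmax, hpi⟩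
    exact ⟨n, c, hc0, hcn, fun i hi =>
      ⟨⟨hnormal i hi.le, hnormal (i + 1) hi, hlt i hi, hmax i hi⟩, hpi i hi⟩⟩
  · rintro ⟨n, c, hc0, hcn, hc⟩
    refine ⟨n, c, hc0, hcn, fun i hi => ?_, fun i hi => (hc i hi).1.lt,
      fun i hi => (hc i hi).1.eq_or_eq, fun i hi => (hc i hi).2⟩
    rcases hi.lt_or_eq with hi | rfl
    · exact (hc i hi).1.normal_left
    · rw [hcn]
      infer_instance

section Map

variable {G G' : Type*} [Group G] [Group G']

namespace IsChiefFactor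

variable {f : G →* G'} {A B : Subgroup G}

theorem sup_ker_inf_eq (h : IsChiefFactor A B) (hne : A.map f ≠ B.map f) :
    (A ⊔ f.ker) ⊓ B = A := by
  have := h.normal_left
  have := h.normal_right
  refine (h.eq_or_eq _ inferInstance (le_inf le_sup_left h.lt.le) inf_le_right).resolve_right
    fun hB => hne (le_antisymm (map_mono h.lt.le) ?_)
  rw [Subgroup.map_le_map_iff]
  exact hB ▸ inf_le_left

theorem map (hf : Function.Surjective f) (h : IsChiefFactor A B) (hne : A.map f ≠ B.map f) :
    IsChiefFactor (A.map f) (B.map f) where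
  normal_left := h.normal_left.map f hf
  normal_right := h.normal_right.map f hf
  lt := (map_mono h.lt.le).lt_of_ne hne
  eq_or_eq X hX hAX hXB := by
    have := h.normal_right
    have := hX.comap f
    have hY : (X.comap f ⊓ B).map f = X := by
      rw [map_inf_of_ker_le f B (MonoidHom.ker_le_comap f X), map_comap_eq_self_of_surjective hf,
        inf_eq_left.2 hXB]
    rcases h.eq_or_eq (X.comap f ⊓ B) inferInstance
        (le_inf (map_le_iff_le_comap.1 hAX) h.lt.le) inf_le_right with hA | hB
    · exact .inl (by rw [← hY, hA])
    · exact .inr (by rw [← hY, hB])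

end IsChiefFactor

theorem PiPropertyAt.map [Finite G] [Finite G'] {f : G →* G'} (hf : Function.Surjective f)
    {H A B : Subgroup G} (hH : f.ker ≤ H) (hA : (A ⊔ f.ker) ⊓ B = A) (h : PiPropertyAt H A B) :
    PiPropertyAt (H.map f) (A.map f) (B.map f) := by
  intro q hq hdvd
  set D := (H ⊔ A) ⊓ B
  have hmapD : (H.map f ⊔ A.map f) ⊓ B.map f = D.map f := by
    rw [← Subgroup.map_sup, map_inf_of_ker_le f B (hH.trans le_sup_left)]
  have hAD : (A ⊔ f.ker) ⊓ D = A := by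
    rw [inf_left_comm, hA, inf_eq_right.2 le_sup_right]
  have hAleD : A ≤ D := hAD ▸ inf_le_right
  rw [hmapD] at hdvd ⊢
  rw [card_div_card_eq_relIndex (map_mono hAleD), relIndex_map_map_of_sup_ker_inf_eq f hAD,
    ← card_div_card_eq_relIndex hAleD]
  exact h q hq (hdvd.trans (index_normalizer_map_dvd hf D))

theorem map_eq_or_isChiefFactor_map_and_piPropertyAt [Finite G] [Finite G'] {f : G →* G'}
    (hf : Function.Surjective f) {H A B : Subgroup G} (hH : f.ker ≤ H)
    (hAB : IsChiefFactor A B) (hPi : PiPropertyAt H A B) :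
    A.map f = B.map f ∨
      IsChiefFactor (A.map f) (B.map f) ∧ PiPropertyAt (H.map f) (A.map f) (B.map f) :=
  or_iff_not_imp_left.2 fun hne =>
    ⟨hAB.map hf hne, hPi.map hf hH (hAB.sup_ker_inf_eq hne)⟩

end Map

/-- Let `H ≤ G` and `N ⊴ G` with `N ≤ H` in the finite group `G`. If `H` satisfies the
partial `Π`-property in `G`, then `HN/N = H/N` satisfies the partial `Π`-property in
`G/N`. -/
theorem partialPi_quotient_of_le (G : Type) [Group G] [Finite G]
    (H N : Subgroup G) [N.Normal] (hNH : N ≤ H) (h : PartialPiProperty G H) :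
    PartialPiProperty (G ⧸ N) (H.map (QuotientGroup.mk' N)) := by
  set f := QuotientGroup.mk' N
  have hf : Function.Surjective f := QuotientGroup.mk'_surjective N
  have hker : f.ker ≤ H := (QuotientGroup.ker_mk' N).symm ▸ hNH
  obtain ⟨n, c, hc0, hcn, hc⟩ := (partialPiProperty_iff H).1 h
  obtain ⟨m, e, he0, hem, he⟩ := exists_chain_of_forall_eq_or
    (fun A B => IsChiefFactor A B ∧ PiPropertyAt (H.map f) A B) (fun i => (c i).map f) n
    fun i hi => map_eq_or_isChiefFactor_map_and_piPropertyAt hf hker (hc i hi).1 (hc i hi).2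
  refine (partialPiProperty_iff _).2 ⟨m, e, ?_, ?_, he⟩
  · rw [he0, hc0, Subgroup.map_bot]
  · rw [hem, hcn, map_top_of_surjective f hf]
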